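/- arXiv:2011.07955 — 3 statements merged into one kernel-verified Lean document; each statement's English description precedes it below -/
import Mathlib

section
/- If X is an exponentially distributed random variable with rate λ > 0, then E[ln X] = −ln λ − γ, where γ is the Euler–Mascheroni constant. -/
/-!
Differentiating the Gamma integral under the integral sign gives
`Γ'(1) = ∫₀^∞ log t · e^{-t} dt`, and `Γ'(1) = -γ`. If `X` has rate `λ`, then `λX` has rate `1`,
so `E[log X] = E[log (λX)] - log λ = -γ - log λ`.
-/

open MeasureTheory ProbabilityTheory Real Set

theorem integral_log_mul_exp_neg :
    ∫ t in Ioi 0, log t * exp (-t) = -eulerMascheroniConstant := by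
  have hGamma : HasDerivAt Complex.GammaIntegral (-eulerMascheroniConstant : ℂ) 1 :=
    Complex.hasDerivAt_Gamma_one.congr_of_eventuallyEq <| by
      filter_upwards [(isOpen_lt continuous_const Complex.continuous_re).mem_nhds
        (by simp : (0 : ℝ) < (1 : ℂ).re)] with s hs using (Complex.Gamma_eq_integral hs).symm
  have h := (Complex.hasDerivAt_GammaIntegral (by simp : (0 : ℝ) < (1 : ℂ).re)).unique hGamma
  simp only [sub_self, Complex.cpow_zero, one_mul, ← Complex.ofReal_mul,
    integral_complex_ofReal] at h
  exact_mod_cast h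

theorem integrableOn_log_mul_exp_neg :
    IntegrableOn (fun t ↦ log t * exp (-t)) (Ioi 0) :=
  Integrable.of_integral_ne_zero <| by
    rw [integral_log_mul_exp_neg, neg_ne_zero]
    exact (one_half_pos.trans one_half_lt_eulerMascheroniConstant).ne'

theorem integral_expMeasure {E : Type*} [NormedAddCommGroup E] [NormedSpace ℝ E] {r : ℝ}
    (hr : 0 < r) (f : ℝ → E) :
    ∫ x, f x ∂expMeasure r = ∫ u in Ioi 0, exp (-u) • f (u / r) := by
  have hpdf : ∀ x ∈ Ioi (0 : ℝ), (exponentialPDF r x).toReal = r * exp (-(r * x)) := fun x hx ↦ by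
    rw [exponentialPDF_of_nonneg (le_of_lt hx), ENNReal.toReal_ofReal (by positivity)]
  calc ∫ x, f x ∂expMeasure r
      = ∫ x, (exponentialPDF r x).toReal • f x :=
        integral_withDensity_eq_integral_toReal_smul (μ := volume)
          (measurable_exponentialPDFReal r).ennreal_ofReal
          (ae_of_all _ fun _ ↦ ENNReal.ofReal_lt_top) f
    _ = ∫ x in Ioi 0, (exponentialPDF r x).toReal • f x := by
        rw [← integral_Ici_eq_integral_Ioi, setIntegral_eq_integral_of_forall_compl_eq_zero]
        intro x hx
        rw [exponentialPDF_of_neg (not_le.mp hx), ENNReal.toReal_zero, zero_smul]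
    _ = ∫ x in Ioi 0, r • (exp (-(r * x)) • f (r * x / r)) := by
        refine setIntegral_congr_fun measurableSet_Ioi fun x hx ↦ ?_
        rw [hpdf x hx, mul_div_cancel_left₀ x hr.ne', smul_smul]
    _ = ∫ u in Ioi 0, exp (-u) • f (u / r) := by
        rw [integral_smul, integral_comp_mul_left_Ioi' (fun u ↦ exp (-u) • f (u / r)) 0 hr,
          mul_zero]

theorem integral_log_expMeasure {r : ℝ} (hr : 0 < r) :
    ∫ x, log x ∂expMeasure r = -log r - eulerMascheroniConstant := by
  have hsplit : ∀ u ∈ Ioi (0 : ℝ), exp (-u) • log (u / r) = log u * exp (-u) - log r * exp (-u) :=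
    fun u hu ↦ by rw [smul_eq_mul, log_div (ne_of_gt hu) hr.ne']; ring
  rw [integral_expMeasure hr, setIntegral_congr_fun measurableSet_Ioi hsplit,
    integral_sub integrableOn_log_mul_exp_neg ((integrableOn_exp_neg_Ioi 0).const_mul _),
    integral_log_mul_exp_neg, integral_const_mul, integral_exp_neg_Ioi_zero]
  ring

theorem stmt_2_general {Ω : Type*} [MeasurableSpace Ω] (μ : Measure Ω)
    (X : Ω → ℝ) (hX : Measurable X) (l : ℝ) (hl : 0 < l)
    (hlaw : Measure.map X μ = expMeasure l) :
    (∫ ω, Real.log (X ω) ∂μ) = -Real.log l - Real.eulerMascheroniConstant := by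
  rw [← integral_log_expMeasure hl, ← hlaw,
    integral_map hX.aemeasurable measurable_log.aestronglyMeasurable]

theorem stmt_2 {Ω : Type*} [MeasurableSpace Ω] (μ : Measure Ω) [IsProbabilityMeasure μ]
    (X : Ω → ℝ) (hX : Measurable X) (l : ℝ) (hl : 0 < l)
    (hlaw : Measure.map X μ = expMeasure l) :
    (∫ ω, Real.log (X ω) ∂μ) = -Real.log l - Real.eulerMascheroniConstant :=
  stmt_2_general μ X hX l hl hlaw
end

section
/- For A > 0, the function g(x, y) = log₂(1 + A/(x·y)) is convex on (0,∞) × (0,∞). -/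
/-!
With `t = log x + log y` one has `A / (x y) = A e^{-t}`, so the function is `φ ∘ L` with
`L (x, y) = log x + log y` concave on the open quadrant and `φ t = log (1 + A e^{-t})` convex and
antitone on `ℝ`; a convex antitone function of a concave one is convex.
`φ` is convex because `φ' t = -A / (e^t + A)` is monotone.
-/

open Real Set

section LogOneAddMulExpNeg

variable {A : ℝ}

lemma hasDerivAt_log_one_add_mul_exp_neg (hA : 0 ≤ A) (t : ℝ) :
    HasDerivAt (fun t => log (1 + A * exp (-t))) (-A / (exp t + A)) t := by
  have hinner : HasDerivAt (fun t => 1 + A * exp (-t)) (-(A * exp (-t))) t := by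
    simpa using ((hasDerivAt_neg t).exp.const_mul A).const_add 1
  convert hinner.log (by positivity) using 1
  rw [exp_neg]
  field_simp

lemma deriv_log_one_add_mul_exp_neg (hA : 0 ≤ A) :
    deriv (fun t => log (1 + A * exp (-t))) = fun t => -A / (exp t + A) :=
  funext fun t => (hasDerivAt_log_one_add_mul_exp_neg hA t).deriv

lemma convexOn_log_one_add_mul_exp_neg (hA : 0 ≤ A) :
    ConvexOn ℝ univ (fun t => log (1 + A * exp (-t))) := by
  refine Monotone.convexOn_univ_of_deriv
    (fun t => (hasDerivAt_log_one_add_mul_exp_neg hA t).differentiableAt) ?_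
  rw [deriv_log_one_add_mul_exp_neg hA]
  intro s t hst
  simp only [neg_div, neg_le_neg_iff]
  gcongr

lemma antitone_log_one_add_mul_exp_neg (hA : 0 ≤ A) :
    Antitone (fun t => log (1 + A * exp (-t))) := by
  intro s t hst
  dsimp only
  gcongr

end LogOneAddMulExpNeg

lemma concaveOn_log_fst_add_log_snd :
    ConcaveOn ℝ (Ioi (0 : ℝ) ×ˢ Ioi (0 : ℝ)) (fun p : ℝ × ℝ => log p.1 + log p.2) := by
  have hquadrant : Convex ℝ (Ioi (0 : ℝ) ×ˢ Ioi (0 : ℝ)) := (convex_Ioi 0).prod (convex_Ioi 0)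
  have hfst := (strictConcaveOn_log_Ioi.concaveOn.comp_linearMap (LinearMap.fst ℝ ℝ ℝ)).subset
    (fun _ hp => hp.1) hquadrant
  have hsnd := (strictConcaveOn_log_Ioi.concaveOn.comp_linearMap (LinearMap.snd ℝ ℝ ℝ)).subset
    (fun _ hp => hp.2) hquadrant
  exact hfst.add hsnd

lemma convexOn_log_one_add_div_mul {A : ℝ} (hA : 0 ≤ A) :
    ConvexOn ℝ (Ioi (0 : ℝ) ×ˢ Ioi (0 : ℝ)) (fun p : ℝ × ℝ => log (1 + A / (p.1 * p.2))) := by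
  have himage : (fun p : ℝ × ℝ => log p.1 + log p.2) '' (Ioi 0 ×ˢ Ioi 0) = univ :=
    eq_univ_of_forall fun t => ⟨(exp t, 1), ⟨exp_pos t, (one_pos : (0 : ℝ) < 1)⟩, by simp⟩
  have hcomp := (himage ▸ convexOn_log_one_add_mul_exp_neg hA).comp_concaveOn
    concaveOn_log_fst_add_log_snd (himage ▸ (antitone_log_one_add_mul_exp_neg hA).antitoneOn _)
  refine hcomp.congr fun p ⟨(hx : 0 < p.1), (hy : 0 < p.2)⟩ => ?_
  simp only [Function.comp_apply, exp_add, exp_neg, exp_log hx, exp_log hy]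
  ring_nf

theorem stmt_5 (A : ℝ) (hA : 0 < A) :
    ConvexOn ℝ (Set.Ioi (0 : ℝ) ×ˢ Set.Ioi (0 : ℝ))
      (fun p : ℝ × ℝ => Real.logb 2 (1 + A / (p.1 * p.2))) :=
  ((convexOn_log_one_add_div_mul hA.le).smul (inv_nonneg.2 (log_nonneg one_le_two))).congr
    fun p _ => by simp only [smul_eq_mul, logb, inv_mul_eq_div]
end

section
/- For A > 0 and any x, y, x⁰, y⁰ > 0, log₂(1 + A/(xy)) ≥ log₂(1 + A/(x⁰y⁰)) − [A/(x⁰(x⁰y⁰ + A) ln 2)]·(x − x⁰) − [A/(y⁰(x⁰y⁰ + A) ln 2)]·(y − y⁰). -/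
open Real

set_option maxHeartbeats 1000000

theorem stmt_7 (A x y x0 y0 : ℝ) (hA : 0 < A) (hx : 0 < x) (hy : 0 < y)
    (hx0 : 0 < x0) (hy0 : 0 < y0) :
    Real.logb 2 (1 + A / (x * y)) ≥
      Real.logb 2 (1 + A / (x0 * y0))
        - (A / (x0 * (x0 * y0 + A) * Real.log 2)) * (x - x0)
        - (A / (y0 * (x0 * y0 + A) * Real.log 2)) * (y - y0) := by
  have hP : 0 < x0 * y0 := mul_pos hx0 hy0
  have hu : 0 < x * y := mul_pos hx hy
  have hPA : 0 < x0 * y0 + A := by linarith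
  have huA : 0 < x * y + A := by linarith
  have hl2 : 0 < Real.log 2 := Real.log_pos one_lt_two
  set P := x0 * y0 with hPdef
  set u := x * y with hudef
  -- g = sqrt(u/P)
  set g := Real.sqrt (u / P) with hgdef
  have hg0 : 0 < g := Real.sqrt_pos.mpr (div_pos hu hP)
  have hg2 : g ^ 2 = u / P := Real.sq_sqrt (div_pos hu hP).le
  have hueq : u = g ^ 2 * P := by rw [hg2]; field_simp
  -- w = sqrt(P(u+A)/(u(P+A)))
  have hWpos : 0 < P * (u + A) / (u * (P + A)) := by positivity
  set w := Real.sqrt (P * (u + A) / (u * (P + A))) with hwdef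
  have hw0 : 0 < w := Real.sqrt_pos.mpr hWpos
  have hw2 : w ^ 2 = P * (u + A) / (u * (P + A)) := Real.sq_sqrt hWpos.le
  -- log identity
  have e1 : 1 + A / u = w ^ 2 * (1 + A / P) := by
    rw [hw2]; field_simp
  have hlog1 : Real.log (1 + A / u) = 2 * Real.log w + Real.log (1 + A / P) := by
    rw [e1, Real.log_mul (pow_ne_zero _ hw0.ne') (by positivity), Real.log_pow]
    push_cast; ring
  -- log w ≥ 1 - 1/w
  have hlogw : 1 - 1 / w ≤ Real.log w := by
    have h := Real.log_le_sub_one_of_pos (inv_pos.mpr hw0)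
    rw [Real.log_inv] at h
    have : (w : ℝ)⁻¹ = 1 / w := by rw [one_div]
    linarith [h, this ▸ h]
  -- key squared inequality
  have hPAg : 0 < P + A * g := by positivity
  have key4 : (P + A) ^ 2 ≤ (w * (P + A * g)) ^ 2 := by
    have h1 : 0 ≤ A * P ^ 2 * (g - 1) ^ 2 * (2 * g + 1) := by positivity
    have h2 : 0 ≤ A ^ 2 * P * g * (g - 1) ^ 2 * (g + 2) := by positivity
    have expand : (w * (P + A * g)) ^ 2 = w ^ 2 * (P + A * g) ^ 2 := by ring
    rw [expand, hw2, hueq]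
    rw [div_mul_eq_mul_div, le_div_iff₀ (by positivity)]
    nlinarith [h1, h2, hP.le, hA.le, hg0.le]
  have key3 : P + A ≤ w * (P + A * g) := by
    have h := Real.sqrt_le_sqrt key4
    rwa [Real.sqrt_sq hPA.le, Real.sqrt_sq (by positivity)] at h
  -- 1 - 1/w ≥ A(1-g)/(P+A)
  have step3 : A * (1 - g) / (P + A) ≤ 1 - 1 / w := by
    have h1w : 1 / w ≤ (P + A * g) / (P + A) := by
      rw [div_le_div_iff₀ hw0 hPA]
      calc 1 * (P + A) = P + A := by ring
        _ ≤ w * (P + A * g) := key3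
        _ = (P + A * g) * w := by ring
    have e : (1 : ℝ) - (P + A * g) / (P + A) = A * (1 - g) / (P + A) := by
      field_simp; ring
    linarith
  -- AM-GM: x/x0 + y/y0 ≥ 2g
  have hab : g = Real.sqrt ((x / x0) * (y / y0)) := by
    rw [hgdef]; congr 1
    rw [hudef, hPdef]; field_simp
  have amgm : 2 * g ≤ x / x0 + y / y0 := by
    have hprod : (x / x0) * (y / y0) ≤ ((x / x0 + y / y0) / 2) ^ 2 := by
      nlinarith [sq_nonneg (x / x0 - y / y0)]
    have h := Real.sqrt_le_sqrt hprod
    rw [Real.sqrt_sq (by positivity)] at h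
    rw [hab]; linarith
  -- main log inequality
  have hmain : Real.log (1 + A / P) - A / (x0 * (P + A)) * (x - x0)
      - A / (y0 * (P + A)) * (y - y0) ≤ Real.log (1 + A / u) := by
    have c1 : A * (1 - g) / (P + A) ≤ Real.log w := le_trans step3 hlogw
    have c2 : - (A / (x0 * (P + A)) * (x - x0)) - A / (y0 * (P + A)) * (y - y0)
        ≤ 2 * (A * (1 - g) / (P + A)) := by
      have e2 : - (A / (x0 * (P + A)) * (x - x0)) - A / (y0 * (P + A)) * (y - y0)
          = A / (P + A) * (2 - (x / x0 + y / y0)) := by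
        field_simp; ring
      have e3 : 2 * (A * (1 - g) / (P + A)) = A / (P + A) * (2 - 2 * g) := by
        field_simp
      rw [e2, e3]
      have hc : 0 ≤ A / (P + A) := by positivity
      have : 2 - (x / x0 + y / y0) ≤ 2 - 2 * g := by linarith
      exact mul_le_mul_of_nonneg_left this hc
    rw [hlog1]
    linarith
  -- conclude for logb
  rw [ge_iff_le, Real.logb, Real.logb]
  have hdiv := (div_le_div_iff_of_pos_right hl2).mpr hmain
  have efinal : Real.log (1 + A / P) / Real.log 2
      - A / (x0 * (P + A) * Real.log 2) * (x - x0)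
      - A / (y0 * (P + A) * Real.log 2) * (y - y0)
      = (Real.log (1 + A / P) - A / (x0 * (P + A)) * (x - x0)
        - A / (y0 * (P + A)) * (y - y0)) / Real.log 2 := by
    field_simp
  rw [efinal]
  exact hdiv
end
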